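/- For a prime $p \equiv 1 \pmod 3$ with $4p = L^2 + 27M^2$, $L \equiv 1 \pmod 3$ (with the sign of $M$ suitably chosen with respect to the generator $\gamma$), the nine cyclotomic numbers of order 3 are: $(0,0)_3 = (p - 8 + L)/9$; $(0,1)_3 = (1,0)_3 = (2,2)_3 = (2p - 4 - L + 9M)/18$; $(1,1)_3 = (0,2)_3 = (2,0)_3 = (2p - 4 - L - 9M)/18$; $(1,2)_3 = (2,1)_3 = (p + 1 + L)/9$. -/

import Mathlib

/-!
Let `χ` be the cubic character with `χ γ = ω`, `ω` a primitive cube root of unity. For a cube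
root of unity `x`, `1 + ω^(2a) x + ω^a x²` is `3` if `x = ω^a` and `0` otherwise, so summing the
product of two such indicators (at `χ v` and `χ (v + 1)`) over `v` expresses `9 (a,b)_3` through
the sums `∑ χ^i(v) χ^j(v + 1)`. All of these are elementary except the Jacobi sum `J = J(χ,χ)`
and its conjugate. Since `J ≡ -1 mod 3` in `ℤ[ω]` and `J J̄ = p`, writing `J = x + yω` gives
`L = 2x - y`, `M = y/3` with `4p = L² + 27M²`.
-/

open Finset

/-- The cyclotomic number `(a,b)_e` over `F` with respect to a generator `γ`. -/
noncomputable def cycNum {F : Type*} [CommRing F] (γ : F) (e a b : ℕ) : ℕ :=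
  Nat.card {v : F // v ≠ 0 ∧ v ≠ -1 ∧ (∃ m : ℕ, γ ^ m = v ∧ m % e = a % e) ∧
    (∃ n : ℕ, γ ^ n = v + 1 ∧ n % e = b % e)}

section CubeRoot

variable {R : Type*} [CommRing R] {ω : R}

lemma exists_eq_intCast_add_intCast_mul_of_mem_adjoin (hω : ω ^ 2 + ω + 1 = 0) {z : R}
    (hz : z ∈ Algebra.adjoin ℤ {ω}) : ∃ a b : ℤ, z = a + b * ω := by
  induction hz using Algebra.adjoin_induction with
  | mem x hx => exact ⟨0, 1, by simp_all⟩
  | algebraMap r => exact ⟨r, 0, by simp⟩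
  | add x y _ _ ihx ihy =>
    obtain ⟨a, b, rfl⟩ := ihx
    obtain ⟨c, d, rfl⟩ := ihy
    exact ⟨a + c, b + d, by push_cast; ring⟩
  | mul x y _ _ ihx ihy =>
    obtain ⟨a, b, rfl⟩ := ihx
    obtain ⟨c, d, rfl⟩ := ihy
    exact ⟨a * c - b * d, a * d + b * c - b * d, by push_cast; linear_combination b * d * hω⟩

variable [IsDomain R]

lemma IsPrimitiveRoot.sq_add_self_add_one (hω : IsPrimitiveRoot ω 3) : ω ^ 2 + ω + 1 = 0 := by
  linear_combination (by simpa [sum_range_succ] using hω.geom_sum_eq_zero (by norm_num) :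
    1 + ω + ω ^ 2 = 0)

lemma one_add_sq_mul_add_mul_sq_eq_ite [DecidableEq R] {α x : R} (hα : α ^ 3 = 1)
    (hx : x ^ 3 = 1) : 1 + α ^ 2 * x + α * x ^ 2 = if x = α then 3 else 0 := by
  split_ifs with h
  · subst h
    linear_combination 2 * hx
  · have ht : α ^ 2 * x - 1 ≠ 0 := fun ht ↦ h (by linear_combination α * ht - x * hα)
    refine (mul_eq_zero.mp ?_).resolve_left ht
    linear_combination α ^ 3 * hx + (1 + α * x ^ 2) * hα

end CubeRoot

lemma IsPrimitiveRoot.pow_eq_pow_sub {M : Type*} [CommMonoid M] {ζ : M} {k n : ℕ}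
    (hζ : IsPrimitiveRoot ζ k) (hn : k ≤ n) : ζ ^ n = ζ ^ (n - k) := by
  obtain ⟨m, rfl⟩ := Nat.exists_eq_add_of_le hn
  rw [pow_add, hζ.pow_eq_one, one_mul, Nat.add_sub_cancel_left]

lemma IsPrimitiveRoot.star_eq_sq {ω : ℂ} (hω : IsPrimitiveRoot ω 3) : star ω = ω ^ 2 := by
  rw [Complex.star_def, ← Complex.inv_eq_conj (hω.norm'_eq_one three_ne_zero)]
  exact inv_eq_of_mul_eq_one_right (by rw [← pow_succ', hω.pow_eq_one])

lemma MulChar.apply_pow_eq_one_of_pow_eq_one {M R : Type*} [CommMonoid M] [CommMonoidWithZero R]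
    {χ : MulChar M R} {n : ℕ} (hn : n ≠ 0) (hχ : χ ^ n = 1) {v : M} (hv : IsUnit v) :
    χ v ^ n = 1 := by
  rw [← MulChar.pow_apply' _ hn, hχ, MulChar.one_apply hv]

section JacobiSum

variable {F : Type*} [CommRing F] [Fintype F] {R : Type*} [CommRing R]

lemma sum_apply_mul_apply_add_one (χ ψ : MulChar F R) :
    ∑ v, χ v * ψ (v + 1) = χ (-1) * jacobiSum χ ψ := by
  rw [jacobiSum, mul_sum]
  refine Fintype.sum_equiv (Equiv.neg F) _ _ fun v ↦ ?_
  rw [Equiv.neg_apply, ← mul_assoc, ← map_mul, neg_one_mul, neg_neg, sub_neg_eq_add, add_comm 1 v]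

lemma sum_apply_add_one (χ : MulChar F R) : ∑ v, χ (v + 1) = ∑ v, χ v :=
  Fintype.sum_equiv (Equiv.addRight 1) _ _ fun _ ↦ rfl

lemma jacobiSum_inv_inv (χ ψ : MulChar F ℂ) : jacobiSum χ⁻¹ ψ⁻¹ = star (jacobiSum χ ψ) := by
  simp only [jacobiSum, star_sum, star_mul', MulChar.star_apply']

end JacobiSum

section CharacterSum

variable {F : Type*} [Field F] [Fintype F] {R : Type*} [CommRing R] [IsDomain R]
  {χ : MulChar F R} (hχ : χ ^ 3 = 1)
include hχ

lemma exists_jacobiSum_self_eq {ω : R} (hω : IsPrimitiveRoot ω 3) (h3 : 3 ∣ Fintype.card F - 1) :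
    ∃ c d : ℤ, jacobiSum χ χ = 3 * c - 1 + 3 * d * ω := by
  obtain ⟨z, hz, hJ⟩ := exists_jacobiSum_eq_neg_one_add (by norm_num) hχ hχ h3 hω
  obtain ⟨a, b, rfl⟩ := exists_eq_intCast_add_intCast_mul_of_mem_adjoin hω.sq_add_self_add_one hz
  refine ⟨b, b - a, ?_⟩
  push_cast
  linear_combination hJ + (a + b * ω - 3 * b) * hω.sq_add_self_add_one

lemma nine_mul_card_filter_eq [DecidableEq R] (hχ1 : χ ≠ 1) {α β : R} (hα : α ^ 3 = 1)
    (hβ : β ^ 3 = 1) :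
    9 * (#{v | χ v = α ∧ χ (v + 1) = β} : R) =
      Fintype.card F - 2 - (α + α ^ 2) - (β + β ^ 2) - (α ^ 2 * β + α * β ^ 2) +
        α ^ 2 * β ^ 2 * jacobiSum χ χ + α * β * jacobiSum χ⁻¹ χ⁻¹ := by
  classical
  have hneg : χ (-1) = 1 := MulChar.val_neg_one_eq_one_of_odd_order (by decide) hχ
  have hneg' : χ⁻¹ (-1) = 1 := by rw [MulChar.inv_apply_eq_inv, hneg, Ring.inverse_one]
  have hsq (v : F) : χ v ^ 2 = χ⁻¹ v := by
    rw [← MulChar.pow_apply' _ two_ne_zero,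
      eq_inv_of_mul_eq_one_left (a := χ ^ 2) (by rw [← pow_succ, hχ])]
  have hα0 : α ≠ 0 := by rintro rfl; norm_num at hα
  have hβ0 : β ≠ 0 := by rintro rfl; norm_num at hβ
  set f : F → R := fun v ↦
    (1 + α ^ 2 * χ v + α * χ v ^ 2) * (1 + β ^ 2 * χ (v + 1) + β * χ (v + 1) ^ 2)
  -- away from `v = 0, -1` both factors of `f v` are indicators
  have hf (v : F) : f v = 9 * (if χ v = α ∧ χ (v + 1) = β then 1 else 0) +
      (if v = 0 then 1 + β + β ^ 2 else 0) + (if v = -1 then 1 + α + α ^ 2 else 0) := by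
    have h0 : χ 0 = 0 := MulChar.map_zero χ
    by_cases hv0 : v = 0
    · simp [f, hv0, h0, hα0.symm]
      ring
    by_cases hv1 : v = -1
    · simp [f, hv1, h0, hβ0.symm, hneg]
      ring
    have hv1' : v + 1 ≠ 0 := by rwa [Ne, add_eq_zero_iff_eq_neg]
    simp only [f, if_neg hv0, if_neg hv1, add_zero,
      one_add_sq_mul_add_mul_sq_eq_ite hα
        (MulChar.apply_pow_eq_one_of_pow_eq_one three_ne_zero hχ (Ne.isUnit hv0)),
      one_add_sq_mul_add_mul_sq_eq_ite hβ
        (MulChar.apply_pow_eq_one_of_pow_eq_one three_ne_zero hχ (Ne.isUnit hv1'))]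
    rw [ite_and]
    split_ifs <;> norm_num
  have hcount : ∑ v, f v =
      9 * #{v | χ v = α ∧ χ (v + 1) = β} + (1 + β + β ^ 2) + (1 + α + α ^ 2) := by
    simp only [hf, sum_add_distrib, ← mul_sum, sum_boole, sum_ite_eq', mem_univ, if_true]
  have hexpand : ∑ v, f v = Fintype.card F + α ^ 2 * β ^ 2 * jacobiSum χ χ - α ^ 2 * β -
      α * β ^ 2 + α * β * jacobiSum χ⁻¹ χ⁻¹ := by
    have h (v : F) : f v = 1 + α ^ 2 * χ v + α * χ⁻¹ v + β ^ 2 * χ (v + 1) + β * χ⁻¹ (v + 1) +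
        α ^ 2 * β ^ 2 * (χ v * χ (v + 1)) + α ^ 2 * β * (χ v * χ⁻¹ (v + 1)) +
        α * β ^ 2 * (χ⁻¹ v * χ (v + 1)) + α * β * (χ⁻¹ v * χ⁻¹ (v + 1)) := by
      simp only [f, ← hsq]
      ring
    simp only [h, sum_add_distrib, ← mul_sum, sum_apply_mul_apply_add_one, sum_apply_add_one,
      MulChar.sum_eq_zero_of_ne_one hχ1, MulChar.sum_eq_zero_of_ne_one (inv_ne_one.mpr hχ1),
      sum_const, card_univ, nsmul_eq_mul, mul_one, hneg, hneg']
    rw [jacobiSum_comm χ⁻¹, jacobiSum_nontrivial_inv hχ1, hneg]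
    ring
  linear_combination hexpand - hcount

end CharacterSum

section Norm

variable {F : Type*} [Field F] [Fintype F] {χ : MulChar F ℂ} (hχ : χ ^ 3 = 1) (hχ1 : χ ≠ 1)
include hχ hχ1

lemma jacobiSum_mul_star : jacobiSum χ χ * star (jacobiSum χ χ) = Fintype.card F := by
  have hchar : ringChar ℂ ≠ ringChar F := by
    simpa only [ringChar.eq_zero] using (CharP.ringChar_ne_zero_of_finite F).symm
  rw [← jacobiSum_inv_inv]
  refine jacobiSum_mul_jacobiSum_inv hchar hχ1 hχ1 fun h ↦ hχ1 ?_
  rw [← hχ, pow_three, h, mul_one]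

lemma four_mul_card_eq {ω : ℂ} (hω : IsPrimitiveRoot ω 3) {c d : ℤ}
    (hJ : jacobiSum χ χ = 3 * c - 1 + 3 * d * ω) :
    4 * (Fintype.card F : ℤ) = (6 * c - 3 * d - 2) ^ 2 + 27 * d ^ 2 := by
  have hnorm := jacobiSum_mul_star hχ hχ1
  simp only [hJ, star_add, star_sub, star_mul', star_ofNat, star_one, star_intCast,
    hω.star_eq_sq] at hnorm
  apply Int.cast_injective (α := ℂ)
  push_cast
  linear_combination (-4) * hnorm +
    (4 * (3 * c - 1) * (3 * d) + 4 * (3 * d) ^ 2 * (ω - 1)) * hω.sq_add_self_add_one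

end Norm

section Generator

variable {F : Type*} [Field F] {γ : F} (hγ : ∀ x : F, x ≠ 0 → ∃ m : ℕ, γ ^ m = x)
include hγ

lemma ne_zero_of_forall_exists_pow_eq [Fintype F] (hF : 2 < Fintype.card F) : γ ≠ 0 := by
  classical
  rintro rfl
  have hsub : (univ : Finset F) ⊆ {0, 1} := by
    intro x _
    by_cases hx : x = 0
    · simp [hx]
    obtain ⟨m, rfl⟩ := hγ x hx
    rcases m.eq_zero_or_pos with rfl | hm
    · simp
    · simp [zero_pow hm.ne']
  have := (card_le_card hsub).trans card_le_two
  rw [card_univ] at this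
  omega

lemma exists_mulChar_apply_pow [Fintype F] (hγ0 : γ ≠ 0) {R : Type*} [CommRing R] {ζ : R}
    (hζ : ζ ^ (Fintype.card F - 1) = 1) : ∃ χ : MulChar F R, ∀ m : ℕ, χ (γ ^ m) = ζ ^ m := by
  classical
  have hg : ∀ x : Fˣ, x ∈ Subgroup.zpowers (Units.mk0 γ hγ0) := fun x ↦ by
    obtain ⟨m, hm⟩ := hγ x x.ne_zero
    exact ⟨m, Units.ext (by simpa using hm)⟩
  have hcard : Fintype.card Fˣ ≠ 0 := Fintype.card_ne_zero
  rw [← Fintype.card_units] at hζ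
  have hζu : Units.ofPowEqOne ζ _ hζ hcard ∈ rootsOfUnity (Fintype.card Fˣ) R := by
    rw [mem_rootsOfUnity]
    exact Units.pow_ofPowEqOne hζ hcard
  refine ⟨MulChar.ofRootOfUnity hζu hg, fun m ↦ ?_⟩
  have hspec := MulChar.ofRootOfUnity_spec hζu hg
  simp only [Units.val_mk0, Units.val_ofPowEqOne] at hspec
  rw [map_pow, hspec]

variable {ω : ℂ} (hω : IsPrimitiveRoot ω 3) {χ : MulChar F ℂ} (hχ : ∀ m : ℕ, χ (γ ^ m) = ω ^ m)
include hω hχ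

omit hγ in
lemma MulChar.ne_one_of_apply_pow : χ ≠ 1 := by
  intro h
  have hγ0 : γ ≠ 0 := fun h0 ↦
    hω.ne_zero three_ne_zero (by rw [← pow_one ω, ← hχ, h0, pow_one, MulChar.map_zero])
  have := hχ 1
  rw [h, MulChar.one_apply (Ne.isUnit (pow_ne_zero 1 hγ0)), pow_one] at this
  exact hω.ne_one (by norm_num) this.symm

lemma MulChar.pow_three_eq_one_of_apply_pow : χ ^ 3 = 1 := by
  refine MulChar.ext fun u ↦ ?_
  obtain ⟨m, hm⟩ := hγ u u.ne_zero
  rw [MulChar.pow_apply' _ three_ne_zero, MulChar.one_apply u.isUnit, ← hm, hχ, ← pow_mul,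
    mul_comm, pow_mul, hω.pow_eq_one, one_pow]

lemma MulChar.apply_eq_pow_iff {v : F} (hv : v ≠ 0) (a : ℕ) :
    χ v = ω ^ a ↔ ∃ m : ℕ, γ ^ m = v ∧ m % 3 = a % 3 := by
  have hpow {m n : ℕ} : ω ^ m = ω ^ n ↔ m % 3 = n % 3 := by
    rw [(hω.isOfFinOrder three_ne_zero).pow_eq_pow_iff_modEq, ← hω.eq_orderOf]
    rfl
  obtain ⟨m, rfl⟩ := hγ v hv
  rw [hχ, hpow]
  refine ⟨fun h ↦ ⟨m, rfl, h⟩, fun ⟨n, hn, hna⟩ ↦ ?_⟩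
  rw [← hpow, ← hχ, ← hn, hχ, hpow, hna]

lemma cycNum_three_eq_card [Fintype F] (a b : ℕ) :
    cycNum γ 3 a b = #{v | χ v = ω ^ a ∧ χ (v + 1) = ω ^ b} := by
  classical
  rw [cycNum, Nat.card_eq_fintype_card, Fintype.card_subtype]
  congr 1
  ext v
  simp only [mem_filter, mem_univ, true_and]
  have hω0 (n : ℕ) : ω ^ n ≠ 0 := pow_ne_zero n (hω.ne_zero three_ne_zero)
  have hiff {w : F} (hw : w ≠ 0) (n : ℕ) := MulChar.apply_eq_pow_iff hγ hω hχ hw n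
  constructor
  · rintro ⟨hv0, hv1, ha, hb⟩
    exact ⟨(hiff hv0 a).2 ha, (hiff (by rwa [Ne, add_eq_zero_iff_eq_neg]) b).2 hb⟩
  · rintro ⟨ha, hb⟩
    have hv0 : v ≠ 0 := fun h ↦ hω0 a (by rw [← ha, h, MulChar.map_zero])
    have hv1 : v + 1 ≠ 0 := fun h ↦ hω0 b (by rw [← hb, h, MulChar.map_zero])
    exact ⟨hv0, by rwa [Ne, ← add_eq_zero_iff_eq_neg], (hiff hv0 a).1 ha, (hiff hv1 b).1 hb⟩

lemma nine_mul_cycNum_three_eq [Fintype F] (a b : ℕ) :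
    9 * (cycNum γ 3 a b : ℂ) =
      Fintype.card F - 2 - (ω ^ a + (ω ^ a) ^ 2) - (ω ^ b + (ω ^ b) ^ 2) -
        ((ω ^ a) ^ 2 * ω ^ b + ω ^ a * (ω ^ b) ^ 2) +
        (ω ^ a) ^ 2 * (ω ^ b) ^ 2 * jacobiSum χ χ + ω ^ a * ω ^ b * star (jacobiSum χ χ) := by
  have hcube (n : ℕ) : (ω ^ n) ^ 3 = 1 := by
    rw [← pow_mul, mul_comm, pow_mul, hω.pow_eq_one, one_pow]
  rw [cycNum_three_eq_card hγ hω hχ, ← jacobiSum_inv_inv,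
    nine_mul_card_filter_eq (MulChar.pow_three_eq_one_of_apply_pow hγ hω hχ)
      (MulChar.ne_one_of_apply_pow hω hχ) (hcube a) (hcube b)]

end Generator

theorem stmt_17 (p : ℕ) (hp : p.Prime) (hp3 : p % 3 = 1)
    (γ : ZMod p) (hγ : ∀ x : ZMod p, x ≠ 0 → ∃ m : ℕ, γ ^ m = x) :
    ∃ L M : ℤ, 4 * (p : ℤ) = L ^ 2 + 27 * M ^ 2 ∧ L % 3 = 1 ∧
      9 * (cycNum γ 3 0 0 : ℤ) = (p : ℤ) - 8 + L ∧
      18 * (cycNum γ 3 0 1 : ℤ) = 2 * (p : ℤ) - 4 - L + 9 * M ∧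
      18 * (cycNum γ 3 1 0 : ℤ) = 2 * (p : ℤ) - 4 - L + 9 * M ∧
      18 * (cycNum γ 3 2 2 : ℤ) = 2 * (p : ℤ) - 4 - L + 9 * M ∧
      18 * (cycNum γ 3 1 1 : ℤ) = 2 * (p : ℤ) - 4 - L - 9 * M ∧
      18 * (cycNum γ 3 0 2 : ℤ) = 2 * (p : ℤ) - 4 - L - 9 * M ∧
      18 * (cycNum γ 3 2 0 : ℤ) = 2 * (p : ℤ) - 4 - L - 9 * M ∧
      9 * (cycNum γ 3 1 2 : ℤ) = (p : ℤ) + 1 + L ∧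
      9 * (cycNum γ 3 2 1 : ℤ) = (p : ℤ) + 1 + L := by
  have := Fact.mk hp
  have hcard : Fintype.card (ZMod p) = p := ZMod.card p
  have h3 : 3 ∣ Fintype.card (ZMod p) - 1 := by rw [hcard]; omega
  have hω : IsPrimitiveRoot (Complex.exp (2 * Real.pi * Complex.I / 3)) 3 :=
    Complex.isPrimitiveRoot_exp 3 three_ne_zero
  set ω := Complex.exp (2 * Real.pi * Complex.I / 3)
  have hγ0 : γ ≠ 0 := ne_zero_of_forall_exists_pow_eq hγ (by have := hp.two_le; omega)
  obtain ⟨χ, hχ⟩ := exists_mulChar_apply_pow hγ hγ0 ((hω.pow_eq_one_iff_dvd _).2 h3)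
  have hχ3 := MulChar.pow_three_eq_one_of_apply_pow hγ hω hχ
  obtain ⟨c, d, hJ⟩ := exists_jacobiSum_self_eq hχ3 hω h3
  have key (a b : ℕ) := (eq_div_iff (by norm_num : (9 : ℂ) ≠ 0)).2
    ((mul_comm _ _).trans (nine_mul_cycNum_three_eq hγ hω hχ a b))
  have hω2 : ω ^ 2 = -1 - ω := by linear_combination hω.sq_add_self_add_one
  refine ⟨6 * c - 3 * d - 2, d, ?_, by omega, ?_, ?_, ?_, ?_, ?_, ?_, ?_, ?_, ?_⟩
  · rw [← hcard]
    exact four_mul_card_eq hχ3 (MulChar.ne_one_of_apply_pow hω hχ) hω hJ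
  all_goals
    apply Int.cast_injective (α := ℂ)
    push_cast
    rw [key, hJ, hcard]
    simp only [star_add, star_sub, star_mul', star_ofNat, star_one, star_intCast, hω.star_eq_sq]
    ring_nf
    simp (disch := norm_num) only [hω.pow_eq_pow_sub, Nat.reduceSub, pow_zero, pow_one, hω2]
    ring_nf
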